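/- arXiv:2403.20042 — 6 statements merged into one kernel-verified Lean document; each statement's English description precedes it below -/
import Mathlib

section
/- For all γ ∈ (11/12, 1), one has 4√(1-γ)/√(1+3γ) < (1/(2γ))·(1 - 6γ + √((1-6γ)² + γ(7+16γ))). -/
theorem stmt_0 (γ : ℝ) (h1 : 11/12 < γ) (h2 : γ < 1) :
    4 * Real.sqrt (1 - γ) / Real.sqrt (1 + 3*γ) <
      (1 / (2*γ)) * (1 - 6*γ + Real.sqrt ((1 - 6*γ)^2 + γ*(7 + 16*γ))) := by
  set a := Real.sqrt (1 - γ) with ha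
  set b := Real.sqrt (1 + 3*γ) with hb
  set s := Real.sqrt ((1 - 6*γ)^2 + γ*(7 + 16*γ)) with hs
  have hγ : (0:ℝ) < γ := by linarith
  have ha0 : 0 ≤ a := Real.sqrt_nonneg _
  have hs0 : 0 ≤ s := Real.sqrt_nonneg _
  have hb0 : 0 < b := Real.sqrt_pos.mpr (by linarith)
  have ha2 : a^2 = 1 - γ := Real.sq_sqrt (by linarith)
  have hb2 : b^2 = 1 + 3*γ := Real.sq_sqrt (by linarith)
  have hs2 : s^2 = (1 - 6*γ)^2 + γ*(7 + 16*γ) := Real.sq_sqrt (by nlinarith)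
  -- key polynomial inequality
  have hP : (112*γ^2 - 27*γ + 7)^2 > 256*(6*γ-1)^2*((1-γ)*(1+3*γ)) := by
    nlinarith [sq_nonneg (γ - 1), sq_nonneg (γ - 11/12), mul_pos hγ hγ,
      sq_nonneg ((γ-1)*(γ-11/12)), mul_pos (mul_pos hγ hγ) hγ]
  have hLpos : 0 < 112*γ^2 - 27*γ + 7 := by nlinarith [sq_nonneg (γ - 27/224)]
  -- key1 : 112γ²-27γ+7 > 16(6γ-1)ab
  have hab2 : (a*b)^2 = (1-γ)*(1+3*γ) := by rw [mul_pow, ha2, hb2]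
  have hab0 : 0 ≤ a*b := mul_nonneg ha0 hb0.le
  have hY2 : (16*(6*γ-1)*(a*b))^2 = 256*(6*γ-1)^2*((1-γ)*(1+3*γ)) := by
    rw [mul_pow, mul_pow, hab2]; ring
  have key1 : 16*(6*γ-1)*(a*b) < 112*γ^2 - 27*γ + 7 := by
    by_contra h
    push_neg at h
    have := mul_self_le_mul_self hLpos.le h
    nlinarith [hP, hY2]
  -- key2 : s*b > 8γa + (6γ-1)b
  have hRpos : 0 < 8*γ*a + (6*γ-1)*b := by
    have h61 : 0 < (6*γ-1)*b := mul_pos (by linarith) hb0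
    have : 0 ≤ 8*γ*a := by positivity
    linarith
  have hsb2 : (s*b)^2 = ((1 - 6*γ)^2 + γ*(7 + 16*γ))*(1+3*γ) := by rw [mul_pow, hs2, hb2]
  have hsq : (8*γ*a + (6*γ-1)*b)^2 < (s*b)^2 := by
    have expand : (8*γ*a + (6*γ-1)*b)^2 = 64*γ^2*(1-γ) + (6*γ-1)^2*(1+3*γ) + 16*γ*(6*γ-1)*(a*b) := by
      have h : (8*γ*a + (6*γ-1)*b)^2 = 64*γ^2*a^2 + (6*γ-1)^2*b^2 + 16*γ*(6*γ-1)*(a*b) := by ring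
      rw [h, ha2, hb2]
    have hmul : γ * (16*(6*γ-1)*(a*b)) < γ * (112*γ^2 - 27*γ + 7) :=
      mul_lt_mul_of_pos_left key1 hγ
    rw [expand, hsb2]
    ring_nf at hmul ⊢
    linarith
  have key2 : 8*γ*a + (6*γ-1)*b < s*b := by
    by_contra h
    push_neg at h
    have hsb0 : 0 ≤ s*b := mul_nonneg hs0 hb0.le
    have := mul_self_le_mul_self hsb0 h
    nlinarith [hsq]
  -- conclude
  rw [div_lt_iff₀ hb0, show (1 / (2*γ)) * (1 - 6*γ + s) * b = ((1 - 6*γ + s)*b)/(2*γ) by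
      field_simp,
    lt_div_iff₀ (by linarith : (0:ℝ) < 2*γ)]
  nlinarith [key2]
end

section
/- The function h(γ) := 1 - 6γ + √((1-6γ)² + γ(7+16γ)) - 4√(1-γ) is strictly increasing on [11/12, 1). -/
/-! The function splits as `√(52γ² - 5γ + 1)`, increasing for `γ ≥ 5/104`, plus
`1 - 6γ - 4√(1 - γ)`, which in `t = √(1 - γ)` reads `6t² - 4t - 5` and so decreases in `t`
(hence increases in `γ`) as long as `t ≤ 1/3`, that is `γ ≥ 8/9`. -/

open Set

theorem strictMonoOn_sqrt_one_sub_six_mul_sq_add : StrictMonoOn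
    (fun γ : ℝ => Real.sqrt ((1 - 6*γ)^2 + γ*(7 + 16*γ))) (Ici (5/104)) := by
  intro a ha b hb hab
  rw [mem_Ici] at ha hb
  exact Real.sqrt_lt_sqrt (by nlinarith) (by nlinarith)

theorem strictMonoOn_one_sub_six_mul_sub_four_sqrt_one_sub : StrictMonoOn
    (fun γ : ℝ => 1 - 6*γ - 4 * Real.sqrt (1 - γ)) (Icc (8/9) 1) := by
  intro a ⟨ha, ha1⟩ b ⟨_, hb1⟩ hab
  set s := Real.sqrt (1 - a)
  set t := Real.sqrt (1 - b)
  have hs : s ^ 2 = 1 - a := Real.sq_sqrt (by linarith)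
  have ht : t ^ 2 = 1 - b := Real.sq_sqrt (by linarith)
  have hts : t < s := Real.sqrt_lt_sqrt (by linarith) (by linarith)
  have hs_le : s ≤ 1/3 := by nlinarith [Real.sqrt_nonneg (1 - a)]
  -- `b - a = (s - t)(s + t)` with `s + t < 2/3`
  show 1 - 6*a - 4*s < 1 - 6*b - 4*t
  nlinarith [mul_lt_mul_of_pos_left (show s + t < 2/3 by linarith) (sub_pos.2 hts)]

theorem stmt_2 :
    StrictMonoOn
      (fun γ : ℝ => 1 - 6*γ + Real.sqrt ((1 - 6*γ)^2 + γ*(7 + 16*γ)) - 4 * Real.sqrt (1 - γ))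
      (Set.Ico (11/12 : ℝ) 1) := by
  intro a ⟨ha, ha1⟩ b ⟨hb, hb1⟩ hab
  have hlin := strictMonoOn_one_sub_six_mul_sub_four_sqrt_one_sub
    ⟨by linarith, ha1.le⟩ ⟨by linarith, hb1.le⟩ hab
  have hsqrt := strictMonoOn_sqrt_one_sub_six_mul_sq_add
    (mem_Ici.2 (by linarith)) (mem_Ici.2 (by linarith)) hab
  dsimp only at hlin hsqrt ⊢
  linarith
end

section
/- For every γ ∈ (0,1) and every δ ∈ ℝ, the function x ↦ ((2-x)² - 4√(1-x)√(1-γx))/x + δ√x(√(1-x) - √(1-γx)) + δ²(1 - √(1-x)√(1-γx)), extended continuously to x = 0 by the value -2(1-γ), has at least one zero x_R with 0 < x_R < 1. -/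
open Real Set

theorem stmt_8 (γ δ : ℝ) (hγ1 : 0 < γ) (hγ2 : γ < 1) :
    ∃ x_R : ℝ, 0 < x_R ∧ x_R < 1 ∧
      (if x_R = 0 then -2 * (1 - γ)
       else ((2 - x_R)^2 - 4 * Real.sqrt (1 - x_R) * Real.sqrt (1 - γ*x_R)) / x_R
         + δ * Real.sqrt x_R * (Real.sqrt (1 - x_R) - Real.sqrt (1 - γ*x_R))
         + δ^2 * (1 - Real.sqrt (1 - x_R) * Real.sqrt (1 - γ*x_R))) = 0 := by
  set F : ℝ → ℝ := fun x =>
    (x^3 - 8*x^2 + (24 - 16*γ)*x + 16*(γ-1)) /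
      ((2-x)^2 + 4 * Real.sqrt (1-x) * Real.sqrt (1-γ*x))
    + δ * Real.sqrt x * (Real.sqrt (1-x) - Real.sqrt (1-γ*x))
    + δ^2 * (1 - Real.sqrt (1-x) * Real.sqrt (1-γ*x)) with hF
  have hcont : ContinuousOn F (Icc 0 1) := by
    apply ContinuousOn.add
    apply ContinuousOn.add
    · apply ContinuousOn.div
      · fun_prop
      · fun_prop
      · intro x hx
        simp only [mem_Icc] at hx
        have h1 : 0 ≤ Real.sqrt (1-x) := Real.sqrt_nonneg _
        have h2 : 0 ≤ Real.sqrt (1-γ*x) := Real.sqrt_nonneg _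
        have : (0:ℝ) < (2-x)^2 + 4 * Real.sqrt (1-x) * Real.sqrt (1-γ*x) := by
          nlinarith [hx.1, hx.2]
        exact this.ne'
    · fun_prop
    · fun_prop
  have hF0 : F 0 < 0 := by
    simp only [hF]
    norm_num [Real.sqrt_zero, Real.sqrt_one]
    nlinarith
  have hF1 : 0 < F 1 := by
    have h1γ : (0:ℝ) ≤ 1 - γ := by linarith
    have hsq : Real.sqrt (1-γ) ^ 2 = 1 - γ := Real.sq_sqrt h1γ
    simp only [hF]
    norm_num [Real.sqrt_zero, Real.sqrt_one, show (1:ℝ)-1 = 0 by ring]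
    nlinarith [sq_nonneg (δ - Real.sqrt (1-γ)/2), hsq]
  have := intermediate_value_Ioo (le_of_lt one_pos) hcont
  have h0mem : (0:ℝ) ∈ Ioo (F 0) (F 1) := ⟨hF0, hF1⟩
  obtain ⟨c, hc, hFc⟩ := this h0mem
  refine ⟨c, hc.1, hc.2, ?_⟩
  have hc0 : c ≠ 0 := ne_of_gt hc.1
  rw [if_neg hc0]
  have hs : Real.sqrt (1-c) ^ 2 = 1 - c := Real.sq_sqrt (by linarith [hc.2])
  have ht : Real.sqrt (1-γ*c) ^ 2 = 1 - γ*c := Real.sq_sqrt (by nlinarith [hc.1, hc.2])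
  have hD : (0:ℝ) < (2-c)^2 + 4 * Real.sqrt (1-c) * Real.sqrt (1-γ*c) := by
    nlinarith [Real.sqrt_nonneg (1-c), Real.sqrt_nonneg (1-γ*c), hc.1, hc.2]
  have key : ((2 - c)^2 - 4 * Real.sqrt (1 - c) * Real.sqrt (1 - γ*c)) / c
      = (c^3 - 8*c^2 + (24 - 16*γ)*c + 16*(γ-1)) /
        ((2-c)^2 + 4 * Real.sqrt (1-c) * Real.sqrt (1-γ*c)) := by
    rw [div_eq_div_iff hc0 hD.ne']
    linear_combination (-16 * Real.sqrt (1-γ*c)^2) * hs + (-16*(1-c)) * ht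
  rw [key]
  simpa [hF] using hFc
end

section
/- For every γ ∈ (0,1) and every δ ∈ ℝ, the secular equation ((2-x)² - 4√(1-x)√(1-γx))/x + δ√x(√(1-x) - √(1-γx)) + δ²(1 - √(1-x)√(1-γx)) = 0 has exactly one solution x_R in (0,1). -/
/-!
Write `s = √(1 - x)`, `r = √(1 - γx)`, `p = √x`, so that `0 < s < r ≤ 1` on `(0, 1)`.
Divided by `p s`, the secular function becomes a quadratic polynomial in `δ` whose coefficients
are functions of `x`. Its `x`-derivative, multiplied by `2 r p⁵ s³`, is the quadratic
`A u² + B u + C` in `u = p δ` with `A = s³ - (2s² - 1) r > 0` and `B² - 4AC < 0`. Hence the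
quotient is strictly increasing on `(0, 1)` for every `δ`, and the root is unique.
The root exists by the intermediate value theorem, applied to a form of the secular function that
is continuous on `[0, 1]` and takes the values `2γ - 2 < 0` at `0` and `1 - δ√(1 - γ) + δ² > 0`
at `1`.
-/

open Real Set

theorem quadratic_pos_of_discrim_neg {K : Type*} [Field K] [LinearOrder K] [IsStrictOrderedRing K]
    {a b c : K} (ha : 0 < a) (h : discrim a b c < 0) (u : K) : 0 < a * (u * u) + b * u + c := by
  rw [discrim] at h
  nlinarith [sq_nonneg (2 * a * u + b)]

namespace RayleighImpedance

variable {γ x : ℝ}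

noncomputable def secular (γ δ x : ℝ) : ℝ :=
  ((2 - x) ^ 2 - 4 * √(1 - x) * √(1 - γ * x)) / x
    + δ * √x * (√(1 - x) - √(1 - γ * x))
    + δ ^ 2 * (1 - √(1 - x) * √(1 - γ * x))

-- `(2 - x)² - 4sr = x (x - 4) + 4 (1 - sr)` and `(1 - sr) / x = (1 + γ - γx) / (1 + sr)`,
-- since `s²r² = (1 - x)(1 - γx)`.
noncomputable def secularReg (γ δ x : ℝ) : ℝ :=
  x - 4 + 4 * (1 + γ - γ * x) / (1 + √(1 - x) * √(1 - γ * x))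
    + δ * √x * (√(1 - x) - √(1 - γ * x))
    + δ ^ 2 * (1 - √(1 - x) * √(1 - γ * x))

noncomputable def quadCoeff (γ x : ℝ) : ℝ := (1 - √(1 - x) * √(1 - γ * x)) / (√x * √(1 - x))

noncomputable def linCoeff (γ x : ℝ) : ℝ := 1 - √(1 - γ * x) / √(1 - x)

noncomputable def constCoeff (γ x : ℝ) : ℝ :=
  ((2 - x) ^ 2 - 4 * √(1 - x) * √(1 - γ * x)) / (x * √x * √(1 - x))

noncomputable def scaledSecular (γ δ x : ℝ) : ℝ :=
  constCoeff γ x + δ * linCoeff γ x + δ ^ 2 * quadCoeff γ x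

theorem secular_eq_mul_scaledSecular (δ : ℝ) (hx0 : 0 < x) (hx1 : x < 1) :
    secular γ δ x = √x * √(1 - x) * scaledSecular γ δ x := by
  have hs0 : 0 < √(1 - x) := sqrt_pos.2 (by linarith)
  have hp0 : 0 < √x := sqrt_pos.2 hx0
  unfold secular scaledSecular constCoeff linCoeff quadCoeff
  field_simp

theorem secular_eq_secularReg (δ : ℝ) (hx0 : 0 < x) (hx1 : x ≤ 1) (hγx : γ * x ≤ 1) :
    secular γ δ x = secularReg γ δ x := by
  have hs2 := sq_sqrt (show 0 ≤ 1 - x by linarith)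
  have hr2 := sq_sqrt (show 0 ≤ 1 - γ * x by linarith)
  have hsr : 0 ≤ √(1 - x) * √(1 - γ * x) := by positivity
  unfold secular secularReg
  set s := √(1 - x)
  set r := √(1 - γ * x)
  field_simp
  linear_combination (-4 * r ^ 2) * hs2 - 4 * (1 - x) * hr2

theorem continuous_secularReg (γ δ : ℝ) : Continuous (secularReg γ δ) := by
  have hden : ∀ x, 1 + √(1 - x) * √(1 - γ * x) ≠ 0 := fun x => by positivity
  unfold secularReg
  fun_prop (disch := exact hden _)

theorem secularReg_zero (γ δ : ℝ) : secularReg γ δ 0 = 2 * γ - 2 := by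
  norm_num [secularReg]
  ring

theorem secularReg_one_pos (δ : ℝ) (hγ0 : 0 ≤ γ) (hγ1 : γ ≤ 1) : 0 < secularReg γ δ 1 := by
  have h := sq_sqrt (show 0 ≤ 1 - γ by linarith)
  norm_num [secularReg]
  nlinarith [sq_nonneg (δ - √(1 - γ) / 2), sqrt_nonneg (1 - γ)]

theorem exists_secular_eq_zero (δ : ℝ) (hγ0 : 0 ≤ γ) (hγ1 : γ < 1) :
    ∃ x ∈ Ioo (0 : ℝ) 1, secular γ δ x = 0 := by
  obtain ⟨x, hx, hx0⟩ := intermediate_value_Ioo zero_le_one (continuous_secularReg γ δ).continuousOn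
    ⟨(secularReg_zero γ δ).trans_lt (by linarith), secularReg_one_pos δ hγ0 hγ1.le⟩
  refine ⟨x, hx, ?_⟩
  rw [secular_eq_secularReg δ hx.1 hx.2.le (by nlinarith [hx.1, hx.2]), hx0]

theorem hasDerivAt_linCoeff (hx1 : x < 1) (hγx : γ * x < 1) :
    HasDerivAt (linCoeff γ) (-(1 - γ) / (2 * √(1 - γ * x) * √(1 - x) ^ 3)) x := by
  have hs := ((hasDerivAt_id' x).const_sub 1).sqrt (by linarith)
  have hr := (((hasDerivAt_id' x).const_mul γ).const_sub 1).sqrt (by linarith)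
  have hs0 : 0 < √(1 - x) := sqrt_pos.2 (by linarith)
  have hr0 : 0 < √(1 - γ * x) := sqrt_pos.2 (by linarith)
  have hs2 := sq_sqrt (show 0 ≤ 1 - x by linarith)
  have hr2 := sq_sqrt (show 0 ≤ 1 - γ * x by linarith)
  refine ((hr.fun_div hs hs0.ne').const_sub 1).congr_deriv ?_
  set s := √(1 - x)
  set r := √(1 - γ * x)
  field_simp
  linear_combination γ * hs2 - hr2

theorem hasDerivAt_quadCoeff (hx0 : 0 < x) (hx1 : x < 1) (hγx : γ * x < 1) :
    HasDerivAt (quadCoeff γ) ((√(1 - x) ^ 3 - (2 * √(1 - x) ^ 2 - 1) * √(1 - γ * x))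
      / (2 * √(1 - γ * x) * √x ^ 3 * √(1 - x) ^ 3)) x := by
  have hs := ((hasDerivAt_id' x).const_sub 1).sqrt (by linarith)
  have hr := (((hasDerivAt_id' x).const_mul γ).const_sub 1).sqrt (by linarith)
  have hp := hasDerivAt_sqrt hx0.ne'
  have hs0 : 0 < √(1 - x) := sqrt_pos.2 (by linarith)
  have hr0 : 0 < √(1 - γ * x) := sqrt_pos.2 (by linarith)
  have hp0 : 0 < √x := sqrt_pos.2 hx0
  have hs2 := sq_sqrt (show 0 ≤ 1 - x by linarith)
  have hr2 := sq_sqrt (show 0 ≤ 1 - γ * x by linarith)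
  have hp2 := sq_sqrt hx0.le
  refine (((hasDerivAt_const x 1).fun_sub (hs.fun_mul hr)).fun_div (hp.fun_mul hs)
    (by positivity)).congr_deriv ?_
  set s := √(1 - x)
  set r := √(1 - γ * x)
  set p := √x
  clear_value s r p
  subst hp2
  field_simp
  linear_combination s ^ 3 * hr2 + r * hs2

theorem hasDerivAt_constCoeff (hx0 : 0 < x) (hx1 : x < 1) (hγx : γ * x < 1) :
    HasDerivAt (constCoeff γ) ((√(1 - γ * x) - 6 * √(1 - x) ^ 2 * √(1 - γ * x) + 4 * √(1 - x) ^ 3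
        + 8 * √(1 - x) ^ 3 * √(1 - γ * x) ^ 2 - 7 * √(1 - x) ^ 4 * √(1 - γ * x))
      / (2 * √(1 - γ * x) * √x ^ 5 * √(1 - x) ^ 3)) x := by
  have hs := ((hasDerivAt_id' x).const_sub 1).sqrt (by linarith)
  have hr := (((hasDerivAt_id' x).const_mul γ).const_sub 1).sqrt (by linarith)
  have hp := hasDerivAt_sqrt hx0.ne'
  have hs0 : 0 < √(1 - x) := sqrt_pos.2 (by linarith)
  have hr0 : 0 < √(1 - γ * x) := sqrt_pos.2 (by linarith)
  have hp0 : 0 < √x := sqrt_pos.2 hx0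
  have hs2 := sq_sqrt (show 0 ≤ 1 - x by linarith)
  have hr2 := sq_sqrt (show 0 ≤ 1 - γ * x by linarith)
  have hp2 := sq_sqrt hx0.le
  refine (((((hasDerivAt_const x 2).fun_sub (hasDerivAt_id' x)).fun_pow 2).fun_sub
    (((hasDerivAt_const x 4).fun_mul hs).fun_mul hr)).fun_div
    (((hasDerivAt_id' x).fun_mul hp).fun_mul hs) (by positivity)).congr_deriv ?_
  set s := √(1 - x)
  set r := √(1 - γ * x)
  set p := √x
  clear_value s r p
  subst hp2
  field_simp
  linear_combination 4 * s ^ 3 * hr2 + r * (7 * s ^ 2 + 1 - 3 * p ^ 2 + p ^ 4) * hs2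


-- Homogenized by `1 = s + (r - s) + (1 - r)`, the polynomial `4ac - b²` has positive coefficients
-- in the barycentric coordinates `s, r - s, 1 - r` of the triangle `0 ≤ s ≤ r ≤ 1`.
theorem discrim_deriv_scaledSecular_neg {s r : ℝ} (hs : 0 < s) (hsr : s < r) (hr : r ≤ 1) :
    discrim (s ^ 3 - (2 * s ^ 2 - 1) * r) (-((1 - s ^ 2) * (r ^ 2 - s ^ 2)))
      (r - 6 * s ^ 2 * r + 4 * s ^ 3 + 8 * s ^ 3 * r ^ 2 - 7 * s ^ 4 * r) < 0 := by
  have hd : 0 < r - s := sub_pos.2 hsr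
  have he : 0 ≤ 1 - r := sub_nonneg.2 hr
  have hP : 0 <
      s ^ 6 * (16 * (r - s) ^ 2 + 32 * (r - s) * (1 - r))
      + s ^ 5 * (64 * (r - s) ^ 3 + 96 * (r - s) ^ 2 * (1 - r) + 32 * (r - s) * (1 - r) ^ 2
        + 32 * (1 - r) ^ 3)
      + s ^ 4 * (64 * (r - s) ^ 4 + 144 * (r - s) ^ 3 * (1 - r) + 208 * (r - s) ^ 2 * (1 - r) ^ 2
        + 176 * (r - s) * (1 - r) ^ 3 + 48 * (1 - r) ^ 4)
      + s ^ 3 * (52 * (r - s) ^ 5 + 264 * (r - s) ^ 4 * (1 - r) + 520 * (r - s) ^ 3 * (1 - r) ^ 2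
        + 480 * (r - s) ^ 2 * (1 - r) ^ 3 + 196 * (r - s) * (1 - r) ^ 4 + 24 * (1 - r) ^ 5)
      + s ^ 2 * (56 * (r - s) ^ 6 + 304 * (r - s) ^ 5 * (1 - r) + 632 * (r - s) ^ 4 * (1 - r) ^ 2
        + 640 * (r - s) ^ 3 * (1 - r) ^ 3 + 324 * (r - s) ^ 2 * (1 - r) ^ 4
        + 72 * (r - s) * (1 - r) ^ 5 + 4 * (1 - r) ^ 6)
      + s * (24 * (r - s) ^ 7 + 140 * (r - s) ^ 6 * (1 - r) + 324 * (r - s) ^ 5 * (1 - r) ^ 2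
        + 380 * (r - s) ^ 4 * (1 - r) ^ 3 + 236 * (r - s) ^ 3 * (1 - r) ^ 4
        + 72 * (r - s) ^ 2 * (1 - r) ^ 5 + 8 * (r - s) * (1 - r) ^ 6)
      + (3 * (r - s) ^ 8 + 20 * (r - s) ^ 7 * (1 - r) + 54 * (r - s) ^ 6 * (1 - r) ^ 2
        + 76 * (r - s) ^ 5 * (1 - r) ^ 3 + 59 * (r - s) ^ 4 * (1 - r) ^ 4
        + 24 * (r - s) ^ 3 * (1 - r) ^ 5 + 4 * (r - s) ^ 2 * (1 - r) ^ 6) := by positivity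
  rw [discrim]
  linear_combination hP

theorem exists_hasDerivAt_scaledSecular_pos (δ : ℝ) (hγ0 : 0 ≤ γ) (hγ1 : γ < 1) (hx0 : 0 < x)
    (hx1 : x < 1) : ∃ d, HasDerivAt (scaledSecular γ δ) d x ∧ 0 < d := by
  have hγx : γ * x < 1 := by nlinarith
  refine ⟨_, ((hasDerivAt_constCoeff hx0 hx1 hγx).fun_add
    ((hasDerivAt_linCoeff hx1 hγx).const_mul δ)).fun_add
    ((hasDerivAt_quadCoeff hx0 hx1 hγx).const_mul (δ ^ 2)), ?_⟩
  have hs0 : 0 < √(1 - x) := sqrt_pos.2 (by linarith)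
  have hp0 : 0 < √x := sqrt_pos.2 hx0
  have hsr : √(1 - x) < √(1 - γ * x) := sqrt_lt_sqrt (by linarith) (by nlinarith)
  have hr1 : √(1 - γ * x) ≤ 1 := sqrt_le_one.2 (by nlinarith)
  have hs2 := sq_sqrt (show 0 ≤ 1 - x by linarith)
  have hr2 := sq_sqrt (show 0 ≤ 1 - γ * x by linarith)
  have hp2 := sq_sqrt hx0.le
  set s := √(1 - x)
  set r := √(1 - γ * x)
  set p := √x
  have hr0 : 0 < r := hs0.trans hsr
  have hA : 0 < s ^ 3 - (2 * s ^ 2 - 1) * r := by nlinarith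
  have hform : (r - 6 * s ^ 2 * r + 4 * s ^ 3 + 8 * s ^ 3 * r ^ 2 - 7 * s ^ 4 * r)
        / (2 * r * p ^ 5 * s ^ 3) + δ * (-(1 - γ) / (2 * r * s ^ 3))
        + δ ^ 2 * ((s ^ 3 - (2 * s ^ 2 - 1) * r) / (2 * r * p ^ 3 * s ^ 3))
      = ((s ^ 3 - (2 * s ^ 2 - 1) * r) * ((p * δ) * (p * δ))
          + -((1 - s ^ 2) * (r ^ 2 - s ^ 2)) * (p * δ)
          + (r - 6 * s ^ 2 * r + 4 * s ^ 3 + 8 * s ^ 3 * r ^ 2 - 7 * s ^ 4 * r))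
        / (2 * r * p ^ 5 * s ^ 3) := by
    field_simp
    linear_combination p * δ * ((s ^ 2 - r ^ 2 - x) * hs2 + x * hr2 - (1 - γ) * (p ^ 2 + x) * hp2)
  rw [hform]
  exact div_pos (quadratic_pos_of_discrim_neg hA (discrim_deriv_scaledSecular_neg hs0 hsr hr1) _)
    (by positivity)

theorem strictMonoOn_scaledSecular (δ : ℝ) (hγ0 : 0 ≤ γ) (hγ1 : γ < 1) :
    StrictMonoOn (scaledSecular γ δ) (Ioo 0 1) := by
  refine strictMonoOn_of_deriv_pos (convex_Ioo 0 1) (fun x hx => ?_) (fun x hx => ?_)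
  · obtain ⟨d, hd, -⟩ := exists_hasDerivAt_scaledSecular_pos δ hγ0 hγ1 hx.1 hx.2
    exact hd.continuousAt.continuousWithinAt
  · rw [interior_Ioo] at hx
    obtain ⟨d, hd, hd0⟩ := exists_hasDerivAt_scaledSecular_pos δ hγ0 hγ1 hx.1 hx.2
    rwa [hd.deriv]

theorem secular_eq_zero_iff (δ : ℝ) (hx0 : 0 < x) (hx1 : x < 1) :
    secular γ δ x = 0 ↔ scaledSecular γ δ x = 0 := by
  have hw : √x * √(1 - x) ≠ 0 := by
    have := sqrt_pos.2 hx0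
    have := sqrt_pos.2 (sub_pos.2 hx1)
    positivity
  rw [secular_eq_mul_scaledSecular δ hx0 hx1, mul_eq_zero, or_iff_right hw]

end RayleighImpedance

open RayleighImpedance

theorem stmt_9 (γ δ : ℝ) (hγ1 : 0 < γ) (hγ2 : γ < 1) :
    ∃! x_R : ℝ, x_R ∈ Set.Ioo (0:ℝ) 1 ∧
      ((2 - x_R)^2 - 4 * Real.sqrt (1 - x_R) * Real.sqrt (1 - γ*x_R)) / x_R
        + δ * Real.sqrt x_R * (Real.sqrt (1 - x_R) - Real.sqrt (1 - γ*x_R))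
        + δ^2 * (1 - Real.sqrt (1 - x_R) * Real.sqrt (1 - γ*x_R)) = 0 := by
  obtain ⟨x, hx, hx0⟩ := exists_secular_eq_zero δ hγ1.le hγ2
  refine ⟨x, ⟨hx, hx0⟩, fun y ⟨hy, hy0⟩ => ?_⟩
  refine (strictMonoOn_scaledSecular δ hγ1.le hγ2).injOn hy hx ?_
  rw [(secular_eq_zero_iff δ hy.1 hy.2).1 hy0, (secular_eq_zero_iff δ hx.1 hx.2).1 hx0]
end

section
/- For x, γ ∈ (0,1) with Θ := √(1-γx)/√(1-x), define A := Θ + γ/Θ, B := -(1/(2√x))(1 - 1/Θ)(2Θ√(1-x) + 1/√(1-x)), C := (2Θ/x²)(1 - 1/Θ)² + 1. Then the discriminant B² - 4A(C-1) satisfies B² - 4A(C-1) < (1/(4x²))(1 - 1/Θ)²·(1/(1-x))·(4γx² + 4(6γ-1)x - (7+16γ)). -/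
theorem stmt_13 (x γ : ℝ) (hx1 : 0 < x) (hx2 : x < 1) (hγ1 : 0 < γ) (hγ2 : γ < 1) :
    let Θ := Real.sqrt (1 - γ*x) / Real.sqrt (1 - x)
    let A := Θ + γ / Θ
    let B := -(1 / (2 * Real.sqrt x)) * (1 - 1/Θ) * (2 * Θ * Real.sqrt (1 - x) + 1 / Real.sqrt (1 - x))
    let C := (2 * Θ / x^2) * (1 - 1/Θ)^2 + 1
    B^2 - 4 * A * (C - 1) <
      (1 / (4 * x^2)) * (1 - 1/Θ)^2 * (1 / (1 - x)) * (4*γ*x^2 + 4*(6*γ - 1)*x - (7 + 16*γ)) := by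
  have hs : (0:ℝ) < 1 - x := by linarith
  have hg : (0:ℝ) < 1 - γ*x := by nlinarith
  show (-(1 / (2 * Real.sqrt x)) * (1 - 1/(Real.sqrt (1 - γ*x) / Real.sqrt (1 - x))) *
        (2 * (Real.sqrt (1 - γ*x) / Real.sqrt (1 - x)) * Real.sqrt (1 - x) + 1 / Real.sqrt (1 - x)))^2
      - 4 * ((Real.sqrt (1 - γ*x) / Real.sqrt (1 - x)) + γ / (Real.sqrt (1 - γ*x) / Real.sqrt (1 - x))) *
        (((2 * (Real.sqrt (1 - γ*x) / Real.sqrt (1 - x)) / x^2) * (1 - 1/(Real.sqrt (1 - γ*x) / Real.sqrt (1 - x)))^2 + 1) - 1)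
      < (1 / (4 * x^2)) * (1 - 1/(Real.sqrt (1 - γ*x) / Real.sqrt (1 - x)))^2 * (1 / (1 - x)) *
        (4*γ*x^2 + 4*(6*γ - 1)*x - (7 + 16*γ))
  set u := Real.sqrt (1 - x) with hu
  set v := Real.sqrt (1 - γ*x) with hv
  set w := Real.sqrt x with hw
  have hu0 : 0 < u := Real.sqrt_pos.2 hs
  have hv0 : 0 < v := Real.sqrt_pos.2 hg
  have hw0 : 0 < w := Real.sqrt_pos.2 hx1
  have hu2 : u^2 = 1 - x := Real.sq_sqrt hs.le
  have hv2 : v^2 = 1 - γ*x := Real.sq_sqrt hg.le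
  have hw2 : w^2 = x := Real.sq_sqrt hx1.le
  have huv : u < v := by
    rw [hu, hv]
    exact Real.sqrt_lt_sqrt hs.le (by nlinarith)
  -- key inequality
  have h1 : 0 < x * (u - v)^2 := by
    have : u - v ≠ 0 := sub_ne_zero.2 (ne_of_lt huv)
    positivity
  have key : 4*x*(u*v) < -4*γ*x^3 + (8*γ+4)*x^2 - (40*γ+9)*x + 25 + 16*γ := by
    nlinarith [h1, hu2, hv2,
      mul_nonneg (sub_nonneg.2 hγ2.le) (show (0:ℝ) ≤ 25 - 13*x + 6*x^2 by nlinarith),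
      mul_nonneg (mul_nonneg hγ1.le (sub_nonneg.2 hx2.le))
        (show (0:ℝ) ≤ 4*x^2 - 12*x + 41 by nlinarith)]
  -- numerator negativity
  have hnum : 4*w^2*(u*v) + (4*w^2*u^2*v^2 + w^2 - 32*v^2 - 32*γ*u^2
      - (4*γ*(w^2)^2 + 4*(6*γ-1)*w^2 - (7+16*γ))) < 0 := by
    rw [hu2, hv2, hw2]
    nlinarith [key]
  -- the main identity
  have hid :
      (-(1 / (2 * w)) * (1 - 1/(v/u)) * (2 * (v/u) * u + 1/u))^2
        - 4 * ((v/u) + γ/(v/u)) * (((2 * (v/u) / x^2) * (1 - 1/(v/u))^2 + 1) - 1)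
        - (1 / (4 * x^2)) * (1 - 1/(v/u))^2 * (1 / (1 - x)) * (4*γ*x^2 + 4*(6*γ-1)*x - (7+16*γ))
      = (1 - u/v)^2 * (4*w^2*(u*v) + (4*w^2*u^2*v^2 + w^2 - 32*v^2 - 32*γ*u^2
          - (4*γ*(w^2)^2 + 4*(6*γ-1)*w^2 - (7+16*γ)))) / (4*w^4*u^2) := by
    rw [show (1:ℝ) - x = u^2 from hu2.symm, show x = w^2 from hw2.symm]
    field_simp
    ring
  have ht : 0 < (1 - u/v)^2 := by
    have : 1 - u/v ≠ 0 := by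
      have : u/v < 1 := (div_lt_one hv0).2 huv
      linarith
    positivity
  have hden : 0 < 4*w^4*u^2 := by positivity
  have hfin : (1 - u/v)^2 * (4*w^2*(u*v) + (4*w^2*u^2*v^2 + w^2 - 32*v^2 - 32*γ*u^2
      - (4*γ*(w^2)^2 + 4*(6*γ-1)*w^2 - (7+16*γ)))) / (4*w^4*u^2) < 0 :=
    div_neg_of_neg_of_pos (mul_neg_of_pos_of_neg ht hnum) hden
  linarith [hid ▸ hfin]
end

section
/- For γ ∈ (11/12, 1) and x ∈ [r₊, 1) where r₊ := (1/(2γ))(1 - 6γ + √((1-6γ)² + γ(7+16γ))), the function f(x,γ,δ) := ((2-x)² - 4√(1-x)√(1-γx))/x + δ√x(√(1-x) - √(1-γx)) + δ²(1 - √(1-x)√(1-γx)) is strictly positive for all δ ∈ ℝ. -/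
set_option maxHeartbeats 800000

theorem stmt_17 (γ : ℝ) (h1 : 11/12 < γ) (h2 : γ < 1) (x : ℝ)
    (hx : x ∈ Set.Ico ((1 / (2*γ)) * (1 - 6*γ + Real.sqrt ((1 - 6*γ)^2 + γ*(7 + 16*γ)))) 1)
    (δ : ℝ) :
    0 < ((2 - x)^2 - 4 * Real.sqrt (1 - x) * Real.sqrt (1 - γ*x)) / x
      + δ * Real.sqrt x * (Real.sqrt (1 - x) - Real.sqrt (1 - γ*x))
      + δ^2 * (1 - Real.sqrt (1 - x) * Real.sqrt (1 - γ*x)) := by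
  obtain ⟨hr, hx1⟩ := hx
  have hγ0 : (0:ℝ) < γ := by linarith
  have h2g : (0:ℝ) < 2*γ := by linarith
  set D : ℝ := (1 - 6*γ)^2 + γ*(7 + 16*γ) with hDdef
  have hDpos : 0 < D := by nlinarith [sq_nonneg (1-6*γ)]
  have hsD : 0 ≤ Real.sqrt D := Real.sqrt_nonneg D
  have hsD2 : (Real.sqrt D)^2 = D := Real.sq_sqrt hDpos.le
  have hr' : 1 - 6*γ + Real.sqrt D ≤ 2*γ*x := by
    rw [one_div, ← div_eq_inv_mul, div_le_iff₀ h2g] at hr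
    linarith
  have hsDgt : 6*γ - 1 < Real.sqrt D := by
    nlinarith [hsD2, hsD, hγ0]
  have hx0 : 0 < x := by nlinarith
  have hP : 0 ≤ 4*γ*x^2 + (24*γ-4)*x - 7 - 16*γ := by
    have h1' : 0 ≤ 2*γ*x + 6*γ - 1 - Real.sqrt D := by linarith
    have h2' : 0 ≤ 2*γ*x + 6*γ - 1 + Real.sqrt D := by linarith
    nlinarith [mul_nonneg h1' h2', hsD2, hγ0]
  have hx9 : 9/10 < x := by
    nlinarith [hP, mul_pos hγ0 hx0, mul_nonneg hγ0.le hx0.le, hx0]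
  set u := Real.sqrt (1 - x) with hu
  set v := Real.sqrt (1 - γ*x) with hv
  set s := Real.sqrt x with hs
  have hu0 : 0 ≤ u := Real.sqrt_nonneg _
  have hv0 : 0 ≤ v := Real.sqrt_nonneg _
  have hgx : 0 < 1 - γ*x := by nlinarith
  have hu2 : u^2 = 1 - x := Real.sq_sqrt (by linarith)
  have hv2 : v^2 = 1 - γ*x := Real.sq_sqrt hgx.le
  have hs2 : s^2 = x := Real.sq_sqrt hx0.le
  -- bound on the product uv
  have hp : u*v ≤ 11/80 := by nlinarith [sq_nonneg (u-v)]
  have hA : 0 < 1 - u*v := by linarith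
  have hC0 : (36:ℝ)/80 ≤ (1+u^2)^2 - 4*(u*v) := by
    have h11 : (1:ℝ) ≤ 1 + u^2 := by nlinarith [sq_nonneg u]
    nlinarith [mul_le_mul h11 h11 (by norm_num) (by linarith)]
  have hvu : (v-u)^2 ≤ 11/40 := by nlinarith [mul_nonneg hu0 hv0]
  have key : 0 < 4*(1-u*v)*((1+u^2)^2-4*(u*v)) - x^2*(v-u)^2 := by
    have h1k : (69:ℝ)/80 * (36/80) ≤ (1-u*v)*((1+u^2)^2-4*(u*v)) :=
      mul_le_mul (by linarith) hC0 (by norm_num) (by linarith)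
    have hx2 : x^2 ≤ 1 := by nlinarith
    have h2k : x^2*(v-u)^2 ≤ 11/40 := by
      nlinarith [mul_nonneg (by linarith : (0:ℝ) ≤ 1 - x^2) (sq_nonneg (v-u))]
    linarith
  have hprod : 0 < x*(4*(1-u*v)*((1+u^2)^2-4*(u*v)) - x^2*(v-u)^2) := mul_pos hx0 key
  set A := 1 - u*v with hAdef
  have hQ : 0 < ((1+u^2)^2 - 4*(u*v)) + x*(δ*s*(u-v)) + x*(δ^2*A) := by
    have hid : 4*(x*A)*(((1+u^2)^2 - 4*(u*v)) + x*(δ*s*(u-v)) + x*(δ^2*A))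
        = (2*x*A*δ + s*x*(u-v))^2 + x*(4*(1-u*v)*((1+u^2)^2-4*(u*v)) - x^2*(v-u)^2) := by
      linear_combination (-(x^2*(u-v)^2)) * hs2
    have h4 : 0 < 4*(x*A)*(((1+u^2)^2 - 4*(u*v)) + x*(δ*s*(u-v)) + x*(δ^2*A)) := by
      rw [hid]
      exact add_pos_of_nonneg_of_pos (sq_nonneg _) hprod
    rcases mul_pos_iff.mp h4 with ⟨_, h⟩ | ⟨hneg, _⟩
    · exact h
    · linarith [mul_pos hx0 hA]
  have e2x : (2-x)^2 - 4*u*v = (1+u^2)^2 - 4*(u*v) := by rw [hu2]; ring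
  have efin : ((2 - x)^2 - 4 * u * v) / x + δ * s * (u - v) + δ^2 * A
      = (((1+u^2)^2 - 4*(u*v)) + x*(δ*s*(u-v)) + x*(δ^2*A)) / x := by
    rw [← e2x]; field_simp
  rw [efin]
  exact div_pos hQ hx0
end
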